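/- arXiv:2512.08642 — 3 statements merged into one kernel-verified Lean document; each statement's English description precedes it below -/
import Mathlib

section
/- In the presented group Π = ⟨u, v ∣ u³ = v⁷, u³ = (uv²)²⟩ (i.e., the quotient of the free group on {u, v} by the normal closure of the relators u³v⁻⁷ and u³((uv²)²)⁻¹), the image of the element u³ lies in the center of Π. -/
/-- Relators of `Π = ⟨u, v ∣ u³ = v⁷, u³ = (uv²)²⟩`, with `u = 0`, `v = 1`. -/
def rels1 : Set (FreeGroup (Fin 2)) :=
  {FreeGroup.of 0 ^ 3 * (FreeGroup.of 1 ^ 7)⁻¹,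
   FreeGroup.of 0 ^ 3 * ((FreeGroup.of 0 * FreeGroup.of 1 ^ 2) ^ 2)⁻¹}

/-- In `Π = ⟨u, v ∣ u³ = v⁷, u³ = (uv²)²⟩`, the element `u³` is central. -/
theorem stmt_1 :
    (PresentedGroup.of 0 : PresentedGroup rels1) ^ 3 ∈
      Subgroup.center (PresentedGroup rels1) := by
  set u : PresentedGroup rels1 := PresentedGroup.of 0 with hu
  set v : PresentedGroup rels1 := PresentedGroup.of 1 with hv
  have hrel : ∀ r ∈ rels1, PresentedGroup.mk rels1 r = 1 := fun r hr =>
    (QuotientGroup.eq_one_iff r).mpr (Subgroup.subset_normalClosure hr)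
  have h1 : u ^ 3 = v ^ 7 := by
    have := hrel _ (Set.mem_insert _ _)
    rw [map_mul, map_inv, map_pow, map_pow] at this
    exact eq_of_mul_inv_eq_one this
  have h2 : u ^ 3 = (u * v ^ 2) ^ 2 := by
    have := hrel _ (Set.mem_insert_of_mem _ rfl)
    simp only [map_mul, map_inv, map_pow] at this
    exact eq_of_mul_inv_eq_one this
  have cv : Commute (u ^ 3) v := by rw [h1]; exact (Commute.refl v).pow_left 7
  have cuv2 : Commute (u ^ 3) (u * v ^ 2) := by
    rw [h2]; exact (Commute.refl _).pow_left 2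
  have cu : Commute (u ^ 3) u := by
    have h := cuv2.mul_right ((cv.pow_right 2).inv_right)
    simp only [mul_inv_cancel_right] at h; exact h
  rw [Subgroup.mem_center_iff]
  intro g
  have : g ∈ Subgroup.centralizer {u ^ 3} := by
    refine PresentedGroup.generated_by rels1 _ (fun j => ?_) g
    fin_cases j
    · exact Subgroup.mem_centralizer_iff.mpr (by simpa using cu.eq)
    · exact Subgroup.mem_centralizer_iff.mpr (by simpa using cv.eq)
  exact (Subgroup.mem_centralizer_iff.mp this _ rfl).symm
end

section
/- The presented group Π = ⟨a, b, c ∣ aba = bab, bcb = cbc, abcb⁻¹a = bcb⁻¹abcb⁻¹⟩ is isomorphic to the triangle Artin group Art₃₃₃ = ⟨a, b, x ∣ aba = bab, bxb = xbx, axa = xax⟩. -/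
/-- Relators of `Π = ⟨a, b, c ∣ aba = bab, bcb = cbc, abcb⁻¹a = bcb⁻¹abcb⁻¹⟩`,
with `a = 0`, `b = 1`, `c = 2`. -/
def relsPi5 : Set (FreeGroup (Fin 3)) :=
  {FreeGroup.of 0 * FreeGroup.of 1 * FreeGroup.of 0 *
     (FreeGroup.of 1 * FreeGroup.of 0 * FreeGroup.of 1)⁻¹,
   FreeGroup.of 1 * FreeGroup.of 2 * FreeGroup.of 1 *
     (FreeGroup.of 2 * FreeGroup.of 1 * FreeGroup.of 2)⁻¹,
   FreeGroup.of 0 * FreeGroup.of 1 * FreeGroup.of 2 * (FreeGroup.of 1)⁻¹ * FreeGroup.of 0 *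
     (FreeGroup.of 1 * FreeGroup.of 2 * (FreeGroup.of 1)⁻¹ * FreeGroup.of 0 *
      FreeGroup.of 1 * FreeGroup.of 2 * (FreeGroup.of 1)⁻¹)⁻¹}

/-- Relators of the triangle Artin group `Art₃₃₃ = ⟨a, b, x ∣ aba = bab, bxb = xbx, axa = xax⟩`,
with `a = 0`, `b = 1`, `x = 2`. -/
def relsArt333 : Set (FreeGroup (Fin 3)) :=
  {FreeGroup.of 0 * FreeGroup.of 1 * FreeGroup.of 0 *
     (FreeGroup.of 1 * FreeGroup.of 0 * FreeGroup.of 1)⁻¹,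
   FreeGroup.of 1 * FreeGroup.of 2 * FreeGroup.of 1 *
     (FreeGroup.of 2 * FreeGroup.of 1 * FreeGroup.of 2)⁻¹,
   FreeGroup.of 0 * FreeGroup.of 2 * FreeGroup.of 0 *
     (FreeGroup.of 2 * FreeGroup.of 0 * FreeGroup.of 2)⁻¹}

lemma rel_one {rels : Set (FreeGroup (Fin 3))} {r : FreeGroup (Fin 3)} (h : r ∈ rels) :
    PresentedGroup.mk rels r = 1 := by
  have : r ∈ Subgroup.normalClosure rels := Subgroup.subset_normalClosure h
  exact (QuotientGroup.eq_one_iff r).2 this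

-- relations in Art
lemma art1 : (PresentedGroup.of 0 : PresentedGroup relsArt333) * .of 1 * .of 0 = .of 1 * .of 0 * .of 1 := by
  have := rel_one (rels := relsArt333) (r := FreeGroup.of 0 * FreeGroup.of 1 * FreeGroup.of 0 *
     (FreeGroup.of 1 * FreeGroup.of 0 * FreeGroup.of 1)⁻¹) (by left; rfl)
  simp only [map_mul, map_inv] at this
  have := mul_inv_eq_one.mp this
  exact this

lemma art2 : (PresentedGroup.of 1 : PresentedGroup relsArt333) * .of 2 * .of 1 = .of 2 * .of 1 * .of 2 := by
  have := rel_one (rels := relsArt333) (r := FreeGroup.of 1 * FreeGroup.of 2 * FreeGroup.of 1 *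
     (FreeGroup.of 2 * FreeGroup.of 1 * FreeGroup.of 2)⁻¹) (by right; left; rfl)
  simp only [map_mul, map_inv] at this
  exact mul_inv_eq_one.mp this

lemma art3 : (PresentedGroup.of 0 : PresentedGroup relsArt333) * .of 2 * .of 0 = .of 2 * .of 0 * .of 2 := by
  have := rel_one (rels := relsArt333) (r := FreeGroup.of 0 * FreeGroup.of 2 * FreeGroup.of 0 *
     (FreeGroup.of 2 * FreeGroup.of 0 * FreeGroup.of 2)⁻¹) (by right; right; rfl)
  simp only [map_mul, map_inv] at this
  exact mul_inv_eq_one.mp this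

lemma pi1 : (PresentedGroup.of 0 : PresentedGroup relsPi5) * .of 1 * .of 0 = .of 1 * .of 0 * .of 1 := by
  have := rel_one (rels := relsPi5) (r := FreeGroup.of 0 * FreeGroup.of 1 * FreeGroup.of 0 *
     (FreeGroup.of 1 * FreeGroup.of 0 * FreeGroup.of 1)⁻¹) (by left; rfl)
  simp only [map_mul, map_inv] at this
  exact mul_inv_eq_one.mp this

lemma pi2 : (PresentedGroup.of 1 : PresentedGroup relsPi5) * .of 2 * .of 1 = .of 2 * .of 1 * .of 2 := by
  have := rel_one (rels := relsPi5) (r := FreeGroup.of 1 * FreeGroup.of 2 * FreeGroup.of 1 *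
     (FreeGroup.of 2 * FreeGroup.of 1 * FreeGroup.of 2)⁻¹) (by right; left; rfl)
  simp only [map_mul, map_inv] at this
  exact mul_inv_eq_one.mp this

lemma pi3 : (PresentedGroup.of 0 : PresentedGroup relsPi5) * .of 1 * .of 2 * (.of 1)⁻¹ * .of 0 =
    .of 1 * .of 2 * (.of 1)⁻¹ * .of 0 * .of 1 * .of 2 * (.of 1)⁻¹ := by
  have := rel_one (rels := relsPi5) (r := FreeGroup.of 0 * FreeGroup.of 1 * FreeGroup.of 2 * (FreeGroup.of 1)⁻¹ * FreeGroup.of 0 *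
     (FreeGroup.of 1 * FreeGroup.of 2 * (FreeGroup.of 1)⁻¹ * FreeGroup.of 0 *
      FreeGroup.of 1 * FreeGroup.of 2 * (FreeGroup.of 1)⁻¹)⁻¹) (by right; right; rfl)
  simp only [map_mul, map_inv] at this
  exact mul_inv_eq_one.mp this

-- f : Pi → Art generators,  c ↦ b⁻¹ x b
def fPA : Fin 3 → PresentedGroup relsArt333 :=
  ![PresentedGroup.of 0, PresentedGroup.of 1, (PresentedGroup.of 1)⁻¹ * PresentedGroup.of 2 * PresentedGroup.of 1]

-- g : Art → Pi generators,  x ↦ b c b⁻¹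
def gAP : Fin 3 → PresentedGroup relsPi5 :=
  ![PresentedGroup.of 0, PresentedGroup.of 1, PresentedGroup.of 1 * PresentedGroup.of 2 * (PresentedGroup.of 1)⁻¹]


lemma hf : ∀ r ∈ relsPi5, FreeGroup.lift fPA r = 1 := by
  rintro r (rfl | rfl | rfl) <;>
    simp only [map_mul, map_inv, FreeGroup.lift_apply_of, fPA, Matrix.cons_val_zero, Matrix.cons_val_one,
      Matrix.head_cons, Matrix.cons_val_two, Matrix.tail_cons] <;>
    rw [mul_inv_eq_one]
  · exact art1
  · set B : PresentedGroup relsArt333 := .of 1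
    set X : PresentedGroup relsArt333 := .of 2
    calc B * (B⁻¹ * X * B) * B = B⁻¹ * (B * X * B) * B := by group
      _ = B⁻¹ * (X * B * X) * B := by rw [art2]
      _ = B⁻¹ * X * B * B * (B⁻¹ * X * B) := by group
  · set A : PresentedGroup relsArt333 := .of 0
    set B : PresentedGroup relsArt333 := .of 1
    set X : PresentedGroup relsArt333 := .of 2
    calc A * B * (B⁻¹ * X * B) * B⁻¹ * A = A * X * A := by group
      _ = X * A * X := art3
      _ = B * (B⁻¹ * X * B) * B⁻¹ * A * B * (B⁻¹ * X * B) * B⁻¹ := by group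

lemma hg : ∀ r ∈ relsArt333, FreeGroup.lift gAP r = 1 := by
  rintro r (rfl | rfl | rfl) <;>
    simp only [map_mul, map_inv, FreeGroup.lift_apply_of, gAP, Matrix.cons_val_zero, Matrix.cons_val_one,
      Matrix.head_cons, Matrix.cons_val_two, Matrix.tail_cons] <;>
    rw [mul_inv_eq_one]
  · exact pi1
  · set B : PresentedGroup relsPi5 := .of 1
    set C : PresentedGroup relsPi5 := .of 2
    calc B * (B * C * B⁻¹) * B = B * (B * C * B) * B⁻¹ := by group
      _ = B * (C * B * C) * B⁻¹ := by rw [pi2]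
      _ = B * C * B⁻¹ * B * (B * C * B⁻¹) := by group
  · set A : PresentedGroup relsPi5 := .of 0
    set B : PresentedGroup relsPi5 := .of 1
    set C : PresentedGroup relsPi5 := .of 2
    calc A * (B * C * B⁻¹) * A = A * B * C * B⁻¹ * A := by group
      _ = B * C * B⁻¹ * A * B * C * B⁻¹ := pi3
      _ = B * C * B⁻¹ * A * (B * C * B⁻¹) := by group

noncomputable def phi : PresentedGroup relsPi5 →* PresentedGroup relsArt333 :=
  PresentedGroup.toGroup hf

noncomputable def psi : PresentedGroup relsArt333 →* PresentedGroup relsPi5 :=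
  PresentedGroup.toGroup hg

/-- The group `⟨a, b, c ∣ aba = bab, bcb = cbc, abcb⁻¹a = bcb⁻¹abcb⁻¹⟩` is isomorphic to
the triangle Artin group `Art₃₃₃`. -/
theorem stmt_5 : Nonempty (PresentedGroup relsPi5 ≃* PresentedGroup relsArt333) := by
  refine ⟨MonoidHom.toMulEquiv phi psi ?_ ?_⟩
  · ext x
    fin_cases x
    · show psi (phi (.of 0)) = .of 0
      simp [phi, psi, PresentedGroup.toGroup.of, fPA, gAP]
    · show psi (phi (.of 1)) = .of 1
      simp [phi, psi, PresentedGroup.toGroup.of, fPA, gAP]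
    · show psi (phi (.of 2)) = .of 2
      simp only [phi, psi, PresentedGroup.toGroup.of, fPA, gAP, map_mul, map_inv,
        Matrix.cons_val_zero, Matrix.cons_val_one, Matrix.head_cons, Matrix.cons_val_two,
        Matrix.tail_cons]
      group
  · ext x
    fin_cases x
    · show phi (psi (.of 0)) = .of 0
      simp [phi, psi, PresentedGroup.toGroup.of, fPA, gAP]
    · show phi (psi (.of 1)) = .of 1
      simp [phi, psi, PresentedGroup.toGroup.of, fPA, gAP]
    · show phi (psi (.of 2)) = .of 2
      simp only [phi, psi, PresentedGroup.toGroup.of, fPA, gAP, map_mul, map_inv,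
        Matrix.cons_val_zero, Matrix.cons_val_one, Matrix.head_cons, Matrix.cons_val_two,
        Matrix.tail_cons]
      group
end

section
/- Let G be a group and N a subgroup of G contained in the center of G such that N is isomorphic to ℤ and the quotient group G/N is a free group. Then G is isomorphic to the direct product N × (G/N). -/
/-!
Free groups are projective, so the quotient map `G → G ⧸ N` has a homomorphic section `σ`.
Because `N` is central, `(n, q) ↦ n * σ q` is then a homomorphism `N × G ⧸ N → G`, and it is
bijective with inverse `g ↦ (g * (σ g)⁻¹, g)`.
-/

universe u

theorem IsFreeGroup.exists_rightInverse_of_surjective {G H : Type*} [Group G] [Group H]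
    [IsFreeGroup H] {f : G →* H} (hf : Function.Surjective f) :
    ∃ σ : H →* G, Function.RightInverse σ f := by
  let σ : H →* G := IsFreeGroup.lift fun a => Function.surjInv hf (IsFreeGroup.of a)
  have hσ : f.comp σ = MonoidHom.id H :=
    IsFreeGroup.ext_hom fun a => by simp [σ, Function.surjInv_eq hf]
  exact ⟨σ, DFunLike.congr_fun hσ⟩

namespace Subgroup

variable {G : Type*} [Group G] {N : Subgroup G} [N.Normal]

noncomputable def prodQuotientEquivOfLeCenter (hN : N ≤ center G) (σ : G ⧸ N →* G)
    (hσ : Function.RightInverse σ (QuotientGroup.mk' N)) : N × (G ⧸ N) ≃* G :=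
  MulEquiv.ofBijective
    (N.subtype.noncommCoprod σ fun n _ => Commute.symm (mem_center_iff.mp (hN n.2) _)) <| by
    have mk'_mul_section (n : N) (q : G ⧸ N) : QuotientGroup.mk' N (n * σ q) = q := by
      rw [map_mul, hσ q, QuotientGroup.mk'_apply, (QuotientGroup.eq_one_iff _).mpr n.2, one_mul]
    constructor
    · rw [injective_iff_map_eq_one]
      rintro ⟨n, q⟩ h
      simp only [MonoidHom.noncommCoprod_apply, coe_subtype] at h
      obtain rfl : q = 1 := by rw [← mk'_mul_section n q, h, map_one]
      simpa using h
    · intro g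
      have hmem : g * (σ g)⁻¹ ∈ N := by
        rw [← QuotientGroup.eq_one_iff, QuotientGroup.mk_mul, QuotientGroup.mk_inv]
        exact mul_inv_eq_one.mpr (hσ g).symm
      exact ⟨(⟨_, hmem⟩, g), by simp⟩

end Subgroup

theorem stmt_11_general (G : Type u) [Group G] (N : Subgroup G) [N.Normal]
    (hcentral : N ≤ Subgroup.center G)
    (hfree : ∃ S : Type u, Nonempty ((G ⧸ N) ≃* FreeGroup S)) :
    Nonempty (G ≃* N × (G ⧸ N)) := by
  obtain ⟨S, ⟨e⟩⟩ := hfree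
  have : IsFreeGroup (G ⧸ N) := IsFreeGroup.ofMulEquiv e.symm
  obtain ⟨σ, hσ⟩ :=
    IsFreeGroup.exists_rightInverse_of_surjective (QuotientGroup.mk'_surjective N)
  exact ⟨(Subgroup.prodQuotientEquivOfLeCenter hcentral σ hσ).symm⟩

/-- A central extension of a free group by `ℤ` splits as a direct product. -/
theorem stmt_11 (G : Type u) [Group G] (N : Subgroup G) [N.Normal]
    (hcentral : N ≤ Subgroup.center G)
    (hZ : Nonempty (N ≃* Multiplicative ℤ))
    (hfree : ∃ S : Type u, Nonempty ((G ⧸ N) ≃* FreeGroup S)) :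
    Nonempty (G ≃* N × (G ⧸ N)) :=
  stmt_11_general G N hcentral hfree
end
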